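/- arXiv:1003.5643 — 2 statements merged into one kernel-verified Lean document; each statement's English description precedes it below -/
import Mathlib

section
/- If a pure state |ψ⟩ of a finite-dimensional multipartite system has all nonnegative coefficients in some computational (product) basis, then among the product states maximizing |⟨λ|ψ⟩| there is at least one product state whose local states all have nonnegative coefficients in that same basis. -/
/-!
A closest product state exists because product states form a compact set (a product of unit
spheres) on which `τ ↦ |⟨τ|ψ⟩|` is continuous. Replacing every amplitude of a maximiser by its
modulus keeps each factor normalised, and for `ψ ≥ 0` the triangle inequality shows that the
overlap does not decrease; so the entrywise modulus of a maximiser is again a maximiser.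
-/

open Finset

section

variable {𝕜 : Type*} [RCLike 𝕜]

theorem isCompact_setOf_sum_norm_sq_eq_one (κ : Type*) [Fintype κ] :
    IsCompact {v : κ → 𝕜 | ∑ i, ‖v i‖ ^ 2 = 1} := by
  have : {v : κ → 𝕜 | ∑ i, ‖v i‖ ^ 2 = 1} =
      WithLp.ofLp '' Metric.sphere (0 : EuclideanSpace 𝕜 κ) 1 := by
    ext v
    rw [← WithLp.ofLp_toLp 2 v, (WithLp.ofLp_injective 2).mem_set_image]
    simp [← EuclideanSpace.norm_sq_eq, pow_eq_one_iff_of_nonneg (norm_nonneg _) two_ne_zero]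
  rw [this]
  exact (isCompact_sphere _ _).image (PiLp.continuous_ofLp 2 _)

variable (𝕜) {ι : Type*} (κ : ι → Type*) [∀ j, Fintype (κ j)]

def productStates : Set (∀ j, κ j → 𝕜) := {τ | ∀ j, ∑ i, ‖τ j i‖ ^ 2 = 1}

theorem isCompact_productStates : IsCompact (productStates 𝕜 κ) := by
  simpa [productStates, Set.pi] using
    isCompact_univ_pi fun j => isCompact_setOf_sum_norm_sq_eq_one (𝕜 := 𝕜) (κ j)

theorem productStates_nonempty [∀ j, Nonempty (κ j)] : (productStates 𝕜 κ).Nonempty := by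
  classical
  exact ⟨fun j => Pi.single (Classical.arbitrary _) 1,
    fun j => by simp [Pi.single_apply, apply_ite (fun z : 𝕜 => ‖z‖ ^ 2)]⟩

variable {𝕜 κ}

theorem norm_mem_productStates {τ : ∀ j, κ j → 𝕜} (hτ : τ ∈ productStates 𝕜 κ) :
    (fun j i => (‖τ j i‖ : 𝕜)) ∈ productStates 𝕜 κ := by
  simpa [productStates] using hτ

variable [Fintype ι] [DecidableEq ι]

/-- `⟨τ|ψ⟩` for the product state `τ = ⊗ⱼ τ j`. -/
def overlap (τ : ∀ j, κ j → 𝕜) (ψ : (∀ j, κ j) → 𝕜) : 𝕜 :=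
  ∑ x, starRingEnd 𝕜 (∏ j, τ j (x j)) * ψ x

theorem continuous_overlap (ψ : (∀ j, κ j) → 𝕜) : Continuous fun τ => overlap τ ψ :=
  continuous_finsetSum _ fun x _ =>
    (RCLike.continuous_conj.comp (by fun_prop)).mul continuous_const

theorem exists_isMaxOn_norm_overlap [∀ j, Nonempty (κ j)] (ψ : (∀ j, κ j) → 𝕜) :
    ∃ τ ∈ productStates 𝕜 κ, IsMaxOn (fun τ => ‖overlap τ ψ‖) (productStates 𝕜 κ) τ :=
  (isCompact_productStates 𝕜 κ).exists_isMaxOn (productStates_nonempty 𝕜 κ)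
    (continuous_overlap ψ).norm.continuousOn

theorem overlap_norm_ofReal (τ : ∀ j, κ j → 𝕜) (w : (∀ j, κ j) → ℝ) :
    overlap (fun j i => (‖τ j i‖ : 𝕜)) (fun x => (w x : 𝕜)) =
      ((∑ x, (∏ j, ‖τ j (x j)‖) * w x : ℝ) : 𝕜) := by
  simp [overlap]

theorem norm_overlap_le_norm_overlap_norm (τ : ∀ j, κ j → 𝕜) {w : (∀ j, κ j) → ℝ}
    (hw : ∀ x, 0 ≤ w x) :
    ‖overlap τ (fun x => (w x : 𝕜))‖ ≤
      ‖overlap (fun j i => (‖τ j i‖ : 𝕜)) (fun x => (w x : 𝕜))‖ :=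
  calc ‖overlap τ (fun x => (w x : 𝕜))‖
      ≤ ∑ x, ‖starRingEnd 𝕜 (∏ j, τ j (x j)) * w x‖ := norm_sum_le _ _
    _ = ∑ x, (∏ j, ‖τ j (x j)‖) * w x := by simp [norm_prod, abs_of_nonneg (hw _)]
    _ = ‖overlap (fun j i => (‖τ j i‖ : 𝕜)) (fun x => (w x : 𝕜))‖ := by
      rw [overlap_norm_ofReal, RCLike.norm_of_nonneg
        (sum_nonneg fun x _ => mul_nonneg (by positivity) (hw x))]

end

theorem positive_state_has_positive_closest_product_state
    (n : ℕ) (d : Fin n → ℕ) (hd : ∀ j, 0 < d j)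
    (ψ : (∀ j, Fin (d j)) → ℂ)
    (hpos : ∀ x, ∃ r : ℝ, 0 ≤ r ∧ ψ x = (r : ℂ)) :
    ∃ σ : ∀ j, Fin (d j) → ℂ,
      (∀ j, ∑ i, ‖σ j i‖ ^ 2 = 1) ∧
      (∀ j i, ∃ r : ℝ, 0 ≤ r ∧ σ j i = (r : ℂ)) ∧
      ∀ τ : ∀ j, Fin (d j) → ℂ, (∀ j, ∑ i, ‖τ j i‖ ^ 2 = 1) →
        ‖∑ x, (starRingEnd ℂ) (∏ j, τ j (x j)) * ψ x‖ ≤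
        ‖∑ x, (starRingEnd ℂ) (∏ j, σ j (x j)) * ψ x‖ := by
  choose r hr hψ using hpos
  obtain rfl : ψ = fun x => (r x : ℂ) := funext hψ
  have : ∀ j, Nonempty (Fin (d j)) := fun j => ⟨⟨0, hd j⟩⟩
  obtain ⟨τ, hτ, hmax⟩ := exists_isMaxOn_norm_overlap (fun x => (r x : ℂ))
  exact ⟨fun j i => (‖τ j i‖ : ℂ), norm_mem_productStates hτ,
    fun j i => ⟨_, norm_nonneg _, rfl⟩,
    fun τ' hτ' => (hmax hτ').trans (norm_overlap_le_norm_overlap_norm τ hr)⟩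
end

section
/- For k ranging over 0 ≤ k ≤ n, the function E(k) = log₂( (n/k)^k (n/(n−k))^{n−k} / C(n,k) ) (with the conventions 0⁰ = 1) is maximized at k = n/2 when n is even, and at k = (n±1)/2 when n is odd. -/
noncomputable def dickeEnt (n k : ℕ) : ℝ :=
  Real.logb 2 ((((n : ℝ) / k) ^ k * ((n : ℝ) / ((n - k : ℕ) : ℝ)) ^ (n - k))
    / (n.choose k : ℝ))

/-!
Write `D(k) = k^k (n-k)^(n-k) C(n,k) = n^n G(k)²` (`dickeOverlap n k`), so that
`E(k) = log₂ (n^n / D(k))` and it suffices to show that `D` is smallest in the middle. `D` is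
symmetric under `k ↦ n - k`, and with `m = n - k - 1` the ratio `D(k+1) / D(k)` equals
`(1 + 1/k)^k / (1 + 1/m)^m`, which is at most `1` for `k ≤ m` because `(1 + 1/k)^k` increases
with `k`: by AM-GM applied to `k` copies of `1 + 1/k` and one copy of `1`,
`(1 + 1/k)^(k/(k+1)) ≤ 1 + 1/(k+1)`.
-/

theorem one_add_inv_pow_le_succ (k : ℕ) :
    (1 + (k : ℝ)⁻¹) ^ k ≤ (1 + ((k : ℝ) + 1)⁻¹) ^ (k + 1) := by
  rcases Nat.eq_zero_or_pos k with rfl | hk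
  · norm_num
  have hk' : (0 : ℝ) < k := by exact_mod_cast hk
  have amgm := Real.geom_mean_le_arith_mean2_weighted (w₁ := k / (k + 1)) (w₂ := 1 / (k + 1))
    (p₁ := 1 + (k : ℝ)⁻¹) (p₂ := 1) (by positivity) (by positivity) (by positivity) zero_le_one
    (by field_simp)
  rw [Real.one_rpow, mul_one] at amgm
  have hrhs : (k : ℝ) / (k + 1) * (1 + (k : ℝ)⁻¹) + 1 / (k + 1) * 1 = 1 + ((k : ℝ) + 1)⁻¹ := by
    field_simp
  rw [hrhs] at amgm
  calc (1 + (k : ℝ)⁻¹) ^ k = ((1 + (k : ℝ)⁻¹) ^ ((k : ℝ) / (k + 1))) ^ (k + 1) := by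
        rw [← Real.rpow_natCast _ (k + 1), ← Real.rpow_mul (by positivity), ← Real.rpow_natCast]
        push_cast
        rw [div_mul_cancel₀ _ (by positivity)]
    _ ≤ (1 + ((k : ℝ) + 1)⁻¹) ^ (k + 1) := by gcongr

theorem monotone_one_add_inv_pow : Monotone fun k : ℕ ↦ (1 + (k : ℝ)⁻¹) ^ k :=
  monotone_nat_of_le_succ fun k ↦ by simpa using one_add_inv_pow_le_succ k

theorem succ_pow_eq_pow_mul_one_add_inv_pow (k : ℕ) :
    ((k : ℝ) + 1) ^ k = (k : ℝ) ^ k * (1 + (k : ℝ)⁻¹) ^ k := by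
  rcases Nat.eq_zero_or_pos k with rfl | hk
  · simp
  rw [← mul_pow, mul_add, mul_one, mul_inv_cancel₀ (by positivity)]

theorem succ_pow_mul_pow_le {k m : ℕ} (hkm : k ≤ m) :
    (k + 1) ^ k * m ^ m ≤ k ^ k * (m + 1) ^ m := by
  have h := mul_le_mul_of_nonneg_left (monotone_one_add_inv_pow hkm)
    (by positivity : (0 : ℝ) ≤ (k : ℝ) ^ k * (m : ℝ) ^ m)
  rw [← Nat.cast_le (α := ℝ)]
  push_cast
  rw [succ_pow_eq_pow_mul_one_add_inv_pow, succ_pow_eq_pow_mul_one_add_inv_pow]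
  linarith

def dickeOverlap (n k : ℕ) : ℕ := k ^ k * (n - k) ^ (n - k) * n.choose k

theorem dickeOverlap_pos {n k : ℕ} (hk : k ≤ n) : 0 < dickeOverlap n k :=
  Nat.mul_pos (Nat.mul_pos Nat.pow_self_pos Nat.pow_self_pos) (Nat.choose_pos hk)

theorem dickeOverlap_sub {n k : ℕ} (hk : k ≤ n) : dickeOverlap n (n - k) = dickeOverlap n k := by
  rw [dickeOverlap, dickeOverlap, Nat.sub_sub_self hk, Nat.choose_symm hk]
  ring

theorem dickeOverlap_succ_le {n k : ℕ} (hk : 2 * k + 1 ≤ n) :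
    dickeOverlap n (k + 1) ≤ dickeOverlap n k := by
  obtain ⟨m, rfl⟩ : ∃ m, n = k + 1 + m := ⟨n - (k + 1), by omega⟩
  have hchoose := Nat.choose_succ_right_eq (k + 1 + m) k
  rw [show k + 1 + m - k = m + 1 by omega] at hchoose
  refine Nat.le_of_mul_le_mul_right ?_ k.succ_pos
  calc dickeOverlap (k + 1 + m) (k + 1) * (k + 1)
      = (k + 1) * (m + 1) * ((k + 1) ^ k * m ^ m) * (k + 1 + m).choose k := by
        rw [dickeOverlap, show k + 1 + m - (k + 1) = m by omega, mul_assoc, hchoose]; ring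
    _ ≤ (k + 1) * (m + 1) * (k ^ k * (m + 1) ^ m) * (k + 1 + m).choose k :=
        Nat.mul_le_mul_right _ (Nat.mul_le_mul_left _ (succ_pow_mul_pow_le (by omega)))
    _ = dickeOverlap (k + 1 + m) k * (k + 1) := by
        rw [dickeOverlap, show k + 1 + m - k = m + 1 by omega]; ring

theorem dickeOverlap_antitoneOn (n : ℕ) :
    AntitoneOn (dickeOverlap n) (Set.Iic ((n + 1) / 2)) :=
  antitoneOn_of_succ_le Set.ordConnected_Iic fun k _ _ hk ↦
    dickeOverlap_succ_le (by rw [Order.succ_eq_add_one, Set.mem_Iic] at hk; omega)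

theorem dickeOverlap_half_le {n k : ℕ} (hk : k ≤ n) :
    dickeOverlap n ((n + 1) / 2) ≤ dickeOverlap n k := by
  have hhalf : (n + 1) / 2 ∈ Set.Iic ((n + 1) / 2) := Set.mem_Iic.mpr le_rfl
  rcases le_total k ((n + 1) / 2) with hle | hge
  · exact dickeOverlap_antitoneOn n hle hhalf hle
  · rw [← dickeOverlap_sub hk]
    exact dickeOverlap_antitoneOn n (show n - k ≤ (n + 1) / 2 by omega) hhalf (by omega)

theorem dickeEnt_eq_logb {n k : ℕ} (hk : k ≤ n) :
    dickeEnt n k = Real.logb 2 ((n : ℝ) ^ n / dickeOverlap n k) := by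
  rw [dickeEnt, div_pow, div_pow, div_mul_div_comm, ← pow_add, Nat.add_sub_cancel' hk, div_div,
    dickeOverlap]
  push_cast
  ring_nf

theorem dickeEnt_le_of_dickeOverlap_le {n j k : ℕ} (hj : j ≤ n) (hk : k ≤ n)
    (h : dickeOverlap n j ≤ dickeOverlap n k) : dickeEnt n k ≤ dickeEnt n j := by
  rw [dickeEnt_eq_logb hj, dickeEnt_eq_logb hk]
  have hj' : (0 : ℝ) < dickeOverlap n j := by exact_mod_cast dickeOverlap_pos hj
  have hk' : (0 : ℝ) < dickeOverlap n k := by exact_mod_cast dickeOverlap_pos hk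
  have hn : (0 : ℝ) < (n : ℝ) ^ n := by exact_mod_cast Nat.pow_self_pos
  exact Real.logb_le_logb_of_le one_lt_two (div_pos hn hk')
    (div_le_div_of_nonneg_left hn.le hj' (by exact_mod_cast h))

theorem dicke_entanglement_maximized_at_half_general
    (n : ℕ) :
    ∀ k ≤ n, dickeEnt n k ≤ dickeEnt n (n / 2) ∧ dickeEnt n k ≤ dickeEnt n ((n + 1) / 2) := by
  intro k hk
  have hfloor : dickeOverlap n (n / 2) = dickeOverlap n ((n + 1) / 2) := by
    rw [show n / 2 = n - (n + 1) / 2 by omega, dickeOverlap_sub (by omega)]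
  refine ⟨dickeEnt_le_of_dickeOverlap_le (by omega) hk ?_,
    dickeEnt_le_of_dickeOverlap_le (by omega) hk (dickeOverlap_half_le hk)⟩
  exact hfloor ▸ dickeOverlap_half_le hk

theorem dicke_entanglement_maximized_at_half
    (n : ℕ) (hn : 0 < n) :
    ∀ k ≤ n, dickeEnt n k ≤ dickeEnt n (n / 2) ∧ dickeEnt n k ≤ dickeEnt n ((n + 1) / 2) :=
  dicke_entanglement_maximized_at_half_general n
end
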